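/- arXiv:1705.08984 — 11 statements merged into one kernel-verified Lean document; each statement's English description precedes it below -/
import Mathlib

section
/- Exterior angle theorem (Euclid I.16): in a real inner product space, if d lies so that Sbtw ℝ b c d (d is on segment bc extended beyond c) and a, b, c are not collinear, then the exterior angle ∠ a c d is strictly greater than the interior opposite angle ∠ b a c. -/
open EuclideanGeometry

/-- Exterior angle theorem (Euclid I.16). -/
theorem exterior_angle_lt {V : Type*} [NormedAddCommGroup V] [InnerProductSpace ℝ V]
    {a b c d : V} (hd : Sbtw ℝ b c d) (hnc : ¬ Collinear ℝ ({a, b, c} : Set V)) :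
    ∠ b a c < ∠ a c d := by
  rw [exterior_angle_eq_angle_add_angle (p₃ := a) d hd.symm, angle_comm c a b]
  exact lt_add_of_pos_right _ (angle_pos_of_not_collinear hnc)
end

section
/- Crossbar theorem: in a real vector space, suppose a, b, c are not collinear, e satisfies Sbtw ℝ a e c, u satisfies Sbtw ℝ b a u, and v satisfies Sbtw ℝ b c v. Then there exists a point w with Sbtw ℝ u w v and Sbtw ℝ b e w; that is, the ray from b through e meets the crossbar uv. -/
/-!
Write `a`, `c`, `e` as points of the segments `bu`, `bv`, `ac`. Then `e - b` is a positive
combination `(1 - t) s (u - b) + t r (v - b)` of `u - b` and `v - b` with total weight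
`m = (1 - t) s + t r < 1`, so `e` lies strictly between `b` and the point of `uv` with weights
proportional to these coefficients. Non-collinearity of `u, b, v`, inherited from `a, b, c`,
keeps that point away from `b` and `u` away from `v`.
-/

open AffineMap

theorem Collinear.collinear_of_wbtw {R V P : Type*} [Field R] [LinearOrder R]
    [IsStrictOrderedRing R] [AddCommGroup V] [Module R V] [AddTorsor V P] {a b c u v : P}
    (h : Collinear R ({u, b, v} : Set P)) (ha : Wbtw R b a u) (hc : Wbtw R b c v) :
    Collinear R ({a, b, c} : Set P) := by
  have ha' : a ∈ affineSpan R ({u, b, v} : Set P) :=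
    affineSpan_mono R (by simp [Set.insert_subset_iff]) ha.mem_affineSpan
  have hc' : c ∈ affineSpan R (insert a ({u, b, v} : Set P)) :=
    affineSpan_mono R (by simp [Set.insert_subset_iff]) hc.mem_affineSpan
  rw [← collinear_insert_iff_of_mem_affineSpan ha',
    ← collinear_insert_iff_of_mem_affineSpan hc'] at h
  exact h.subset (by simp [Set.insert_subset_iff])

theorem lineMap_lineMap_lineMap_eq {k V : Type*} [Field k] [AddCommGroup V] [Module k V]
    (b u v : V) {s r t : k} (hm : (1 - t) * s + t * r ≠ 0) :
    lineMap (lineMap b u s) (lineMap b v r) t =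
      lineMap b (lineMap u v (t * r / ((1 - t) * s + t * r))) ((1 - t) * s + t * r) := by
  simp only [lineMap_apply_module]
  match_scalars <;> field_simp <;> ring

/-- Crossbar theorem: the ray from `b` through `e` meets the crossbar `uv`. -/
theorem crossbar {V : Type*} [AddCommGroup V] [Module ℝ V]
    {a b c e u v : V} (hnc : ¬ Collinear ℝ ({a, b, c} : Set V))
    (he : Sbtw ℝ a e c) (hu : Sbtw ℝ b a u) (hv : Sbtw ℝ b c v) :
    ∃ w : V, Sbtw ℝ u w v ∧ Sbtw ℝ b e w := by
  have hubv : ¬ Collinear ℝ ({u, b, v} : Set V) := fun h =>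
    hnc (h.collinear_of_wbtw hu.wbtw hv.wbtw)
  obtain ⟨s, ⟨hs0, hs1⟩, rfl⟩ := hu.mem_image_Ioo
  obtain ⟨r, ⟨hr0, hr1⟩, rfl⟩ := hv.mem_image_Ioo
  obtain ⟨t, ⟨ht0, ht1⟩, rfl⟩ := he.mem_image_Ioo
  set m := (1 - t) * s + t * r
  have hm0 : 0 < m := by nlinarith
  have hm1 : m < 1 := by nlinarith
  have hl0 : 0 < t * r / m := by positivity
  have hl1 : t * r / m < 1 := by rw [div_lt_one hm0]; nlinarith
  have huw : Sbtw ℝ u (lineMap u v (t * r / m)) v := sbtw_lineMap_iff.2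
    ⟨fun huv => hubv ((collinear_pair ℝ b v).subset (by simp [huv])), hl0, hl1⟩
  refine ⟨_, huw, ?_⟩
  rw [lineMap_lineMap_lineMap_eq b u v hm0.ne', sbtw_lineMap_iff]
  exact ⟨fun hbw => hubv (hbw ▸ huw.wbtw.collinear), hm0, hm1⟩
end

section
/- Two-perpendiculars lemma: in a real inner product space, let a, b, c, d be pairwise distinct points with ⟪b - a, d - a⟫ = 0 and ⟪c - d, d - a⟫ = 0 (so ab ⊥ ad and cd ⊥ ad). If m lies on the line through a and d (Collinear ℝ {a, d, m}) and m lies strictly between b and c (Sbtw ℝ b m c), then m lies strictly between a and d: Sbtw ℝ a m d. -/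
/-!
The affine function `p ↦ ⟪p - a, d - a⟫` vanishes at `b` and, because `cd ⊥ ad`, equals
`‖d - a‖²` at `c`; so at `m = lineMap b c s` it equals `s ‖d - a‖²`. On the line `ad` the same
function reads off the parameter, hence `m = lineMap a d s` with `0 < s < 1`.
-/

open AffineMap RealInnerProductSpace

section

variable {V : Type*} [NormedAddCommGroup V] [InnerProductSpace ℝ V]

theorem inner_lineMap_sub_left_self (a d : V) (t : ℝ) :
    ⟪lineMap a d t - a, d - a⟫ = t * ‖d - a‖ ^ 2 := by
  rw [← vsub_eq_sub, lineMap_vsub_left, vsub_eq_sub, real_inner_smul_left,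
    real_inner_self_eq_norm_sq]

theorem inner_lineMap_sub_of_perpendicular {a b c d : V} (h₁ : ⟪b - a, d - a⟫ = 0)
    (h₂ : ⟪c - d, d - a⟫ = 0) (s : ℝ) :
    ⟪lineMap b c s - a, d - a⟫ = s * ‖d - a‖ ^ 2 := by
  have hsplit : lineMap b c s - a = (1 - s) • (b - a) + s • (c - d) + s • (d - a) := by
    rw [lineMap_apply_module]
    module
  rw [hsplit, inner_add_left, inner_add_left, real_inner_smul_left, real_inner_smul_left,
    real_inner_smul_left, h₁, h₂, real_inner_self_eq_norm_sq]
  ring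

theorem eq_of_lineMap_eq_lineMap_of_perpendicular {a b c d : V} (had : a ≠ d)
    (h₁ : ⟪b - a, d - a⟫ = 0) (h₂ : ⟪c - d, d - a⟫ = 0) {s t : ℝ}
    (h : lineMap a d t = lineMap b c s) : t = s := by
  have hnorm : ‖d - a‖ ^ 2 ≠ 0 := by
    simpa [sub_eq_zero] using had.symm
  refine mul_right_cancel₀ hnorm ?_
  rw [← inner_lineMap_sub_left_self, h, inner_lineMap_sub_of_perpendicular h₁ h₂]

end

theorem two_perpendiculars_general {V : Type*} [NormedAddCommGroup V] [InnerProductSpace ℝ V]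
    {a b c d m : V}
    (had : a ≠ d)
    (h1 : inner ℝ (b - a) (d - a) = (0 : ℝ)) (h2 : inner ℝ (c - d) (d - a) = (0 : ℝ))
    (hm : Collinear ℝ ({a, d, m} : Set V)) (hbm : Sbtw ℝ b m c) :
    Sbtw ℝ a m d := by
  obtain ⟨t, ht⟩ := mem_affineSpan_pair_iff_exists_lineMap_eq.1 <|
    hm.mem_affineSpan_of_mem_of_ne (p₃ := m) (by simp) (by simp) (by simp) had
  obtain ⟨s, hs, rfl⟩ := hbm.mem_image_Ioo
  obtain rfl := eq_of_lineMap_eq_lineMap_of_perpendicular had h1 h2 ht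
  rw [← ht]
  exact sbtw_lineMap_iff.2 ⟨had, hs⟩

/-- Two-perpendiculars lemma: if `ab ⊥ ad` and `cd ⊥ ad`, and the segment `bc` meets
the line through `a` and `d` in a point `m`, then `m` is strictly between `a` and `d`. -/
theorem two_perpendiculars {V : Type*} [NormedAddCommGroup V] [InnerProductSpace ℝ V]
    {a b c d m : V}
    (hab : a ≠ b) (hac : a ≠ c) (had : a ≠ d) (hbc : b ≠ c) (hbd : b ≠ d) (hcd : c ≠ d)
    (h1 : inner ℝ (b - a) (d - a) = (0 : ℝ)) (h2 : inner ℝ (c - d) (d - a) = (0 : ℝ))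
    (hm : Collinear ℝ ({a, d, m} : Set V)) (hbm : Sbtw ℝ b m c) :
    Sbtw ℝ a m d :=
  two_perpendiculars_general had h1 h2 hm hbm
end

section
/- A quadrilateral with congruent opposite sides whose diagonals meet is a parallelogram: in a real inner product space, if dist a b = dist d c, dist b c = dist a d, and there exists m with Sbtw ℝ a m c and Sbtw ℝ b m d, then b - a = c - d. -/
open scoped RealInnerProductSpace


/-- A quadrilateral with congruent opposite sides whose diagonals meet is a parallelogram. -/
theorem quadrilateral_congruent_sides_parallelogram {V : Type*} [NormedAddCommGroup V]
    [InnerProductSpace ℝ V] {a b c d : V}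
    (h1 : dist a b = dist d c) (h2 : dist b c = dist a d)
    (hm : ∃ m : V, Sbtw ℝ a m c ∧ Sbtw ℝ b m d) :
    b - a = c - d := by
  obtain ⟨m, ham, hbm⟩ := hm
  set w : V := a + c - (b + d) with hw
  -- squared side conditions
  have e1 : ⟪a - b, a - b⟫ = ⟪d - c, d - c⟫ := by
    rw [real_inner_self_eq_norm_sq, real_inner_self_eq_norm_sq, ← dist_eq_norm, ← dist_eq_norm, h1]
  have e2 : ⟪b - c, b - c⟫ = ⟪a - d, a - d⟫ := by
    rw [real_inner_self_eq_norm_sq, real_inner_self_eq_norm_sq, ← dist_eq_norm, ← dist_eq_norm, h2]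
  -- diagonals orthogonal to w
  have hca : ⟪c - a, w⟫ = 0 := by
    simp only [hw, inner_sub_left, inner_sub_right, inner_add_left, inner_add_right] at e1 e2 ⊢
    linarith [real_inner_comm a b, real_inner_comm a c, real_inner_comm a d,
      real_inner_comm b c, real_inner_comm b d, real_inner_comm c d]
  have hdb : ⟪d - b, w⟫ = 0 := by
    simp only [hw, inner_sub_left, inner_sub_right, inner_add_left, inner_add_right] at e1 e2 ⊢
    linarith [real_inner_comm a b, real_inner_comm a c, real_inner_comm a d,
      real_inner_comm b c, real_inner_comm b d, real_inner_comm c d]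
  -- intersection point of diagonals
  obtain ⟨t, _, hmt⟩ : ∃ t ∈ Set.Icc (0:ℝ) 1, a + t • (c - a) = m := by
    have := ham.wbtw
    rw [← mem_segment_iff_wbtw, segment_eq_image'] at this
    exact this
  obtain ⟨s, _, hms⟩ : ∃ s ∈ Set.Icc (0:ℝ) 1, b + s • (d - b) = m := by
    have := hbm.wbtw
    rw [← mem_segment_iff_wbtw, segment_eq_image'] at this
    exact this
  have hab : ⟪a - b, w⟫ = 0 := by
    have hmeq : a + t • (c - a) = b + s • (d - b) := by rw [hmt, hms]
    have : ⟪a + t • (c - a), w⟫ = ⟪b + s • (d - b), w⟫ := by rw [hmeq]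
    simp only [inner_add_left, real_inner_smul_left, hca, hdb, mul_zero] at this
    simp only [inner_sub_left]
    linarith
  -- conclude w = 0
  have hww : ⟪w, w⟫ = 0 := by
    simp only [hw, inner_sub_left, inner_sub_right, inner_add_left, inner_add_right] at e1 hab ⊢
    linarith [real_inner_comm a b, real_inner_comm a c, real_inner_comm a d,
      real_inner_comm b c, real_inner_comm b d, real_inner_comm c d]
  have hw0 : w = 0 := by rwa [inner_self_eq_zero] at hww
  have hsum : a + c = b + d := by rwa [hw, sub_eq_zero] at hw0
  have : b - a - (c - d) = (b + d) - (a + c) := by abel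
  rw [← sub_eq_zero, this, hsum, sub_self]
end

section
/- Angle copying: in the Euclidean plane EuclideanSpace ℝ (Fin 2), let p ≠ s, let q be a point not in the affine span of {p, s}, and let a, b, c be points with a ≠ b and c ≠ b. Then there exist points a', c', x such that ∠ a' p c' = ∠ a b c, c' lies in the affine span of {p, s} with c' ≠ p, x lies in the affine span of {p, s}, and Wbtw ℝ q x a' (so a' lies on the opposite side of the line ps from q, or on it). -/
/-!
Let `u` be the unit vector along `s - p` and `v` the unit normal to the line `ps` pointing from `q`
towards the line. For `θ = ∠ a b c ∈ [0, π]` the point `a' = p + cos θ • u + sin θ • v`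
satisfies `∠ a' p s = θ`, and since its `v`-coordinate is `≥ 0` while that of `q` is `< 0`,
the segment from `q` to `a'` crosses the line.
-/

open EuclideanGeometry

namespace InnerProductGeometry

variable {V : Type*} [NormedAddCommGroup V] [InnerProductSpace ℝ V]

theorem angle_cos_smul_add_sin_smul {u v : V} (hu : ‖u‖ = 1) (hv : ‖v‖ = 1)
    (huv : inner ℝ u v = 0) {θ : ℝ} (h0 : 0 ≤ θ) (hπ : θ ≤ Real.pi) :
    angle (Real.cos θ • u + Real.sin θ • v) u = θ := by
  have hinner : inner ℝ (Real.cos θ • u + Real.sin θ • v) u = Real.cos θ := by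
    simp [inner_add_left, real_inner_smul_left, hu, real_inner_comm u v, huv]
  have hnorm : ‖Real.cos θ • u + Real.sin θ • v‖ = 1 := by
    have horth : inner ℝ (Real.cos θ • u) (Real.sin θ • v) = 0 := by
      simp [real_inner_smul_left, real_inner_smul_right, huv]
    have := norm_add_sq_eq_norm_sq_add_norm_sq_real horth
    rw [norm_smul, norm_smul, hu, hv, mul_one, mul_one, Real.norm_eq_abs, Real.norm_eq_abs,
      abs_mul_abs_self, abs_mul_abs_self, ← sq (Real.cos θ), ← sq (Real.sin θ),
      Real.cos_sq_add_sin_sq] at this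
    rwa [← mul_one 1, mul_self_inj_of_nonneg (norm_nonneg _) zero_le_one] at this
  rw [angle, hinner, hnorm, hu, one_mul, div_one, Real.arccos_cos h0 hπ]

end InnerProductGeometry

namespace AffineSubspace

variable {V P : Type*} [NormedAddCommGroup V] [InnerProductSpace ℝ V] [MetricSpace P]
  [NormedAddTorsor V P]

theorem exists_unit_normal_wOppSide {L : AffineSubspace ℝ P} [Nonempty L]
    [L.direction.HasOrthogonalProjection] {q : P} (hq : q ∉ L) :
    ∃ v ∈ L.directionᗮ, ‖v‖ = 1 ∧ ∀ y ∈ L, ∀ t : ℝ, 0 ≤ t → L.WOppSide q (t • v +ᵥ y) := by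
  -- `v` is the unit vector pointing from `q` towards its foot `q'` on `L`.
  set q' : P := ↑(orthogonalProjection L q)
  have hw : q' -ᵥ q ≠ 0 := vsub_ne_zero.2 fun h => hq (h ▸ orthogonalProjection_mem q)
  refine ⟨‖q' -ᵥ q‖⁻¹ • (q' -ᵥ q),
    Submodule.smul_mem _ _ (orthogonalProjection_vsub_mem_direction_orthogonal L q),
    norm_smul_inv_norm hw, fun y hy t ht => ?_⟩
  refine (wOppSide_iff_exists_left (orthogonalProjection_mem q)).2 (Or.inr ⟨y, hy, ?_⟩)
  have hdir : y -ᵥ (t • ‖q' -ᵥ q‖⁻¹ • (q' -ᵥ q) +ᵥ y) = (t * ‖q' -ᵥ q‖⁻¹) • (q -ᵥ q') := by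
    rw [vsub_vadd_eq_vsub_sub, vsub_self, zero_sub, smul_smul, ← smul_neg, neg_vsub_eq_vsub_rev]
  rw [hdir]
  exact SameRay.sameRay_nonneg_smul_right _ (by positivity)

end AffineSubspace

namespace EuclideanGeometry

variable {V P : Type*} [NormedAddCommGroup V] [InnerProductSpace ℝ V] [MetricSpace P]
  [NormedAddTorsor V P]

theorem exists_angle_eq_wOppSide_line {p s q : P} (hps : p ≠ s) (hq : q ∉ line[ℝ, p, s])
    {θ : ℝ} (h0 : 0 ≤ θ) (hπ : θ ≤ Real.pi) :
    ∃ a', ∠ a' p s = θ ∧ line[ℝ, p, s].WOppSide q a' := by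
  obtain ⟨v, hv_perp, hv, hv_opp⟩ := AffineSubspace.exists_unit_normal_wOppSide hq
  have hsp : s -ᵥ p ≠ 0 := vsub_ne_zero.2 hps.symm
  set u := ‖s -ᵥ p‖⁻¹ • (s -ᵥ p)
  have hu_mem : u ∈ line[ℝ, p, s].direction := by
    rw [direction_affineSpan]
    exact Submodule.smul_mem _ _ (vsub_rev_mem_vectorSpan_pair ℝ p s)
  have hfoot : Real.cos θ • u +ᵥ p ∈ line[ℝ, p, s] :=
    AffineSubspace.vadd_mem_of_mem_direction (Submodule.smul_mem _ _ hu_mem)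
      (left_mem_affineSpan_pair ℝ p s)
  refine ⟨Real.sin θ • v +ᵥ (Real.cos θ • u +ᵥ p), ?_,
    hv_opp _ hfoot _ (Real.sin_nonneg_of_nonneg_of_le_pi h0 hπ)⟩
  have huv : inner ℝ u v = 0 := Submodule.inner_right_of_mem_orthogonal hu_mem hv_perp
  rw [angle, vadd_vadd, vadd_vsub, add_comm, ← smul_inv_smul₀ (norm_ne_zero_iff.2 hsp) (s -ᵥ p),
    InnerProductGeometry.angle_smul_right_of_pos _ _ (norm_pos_iff.2 hsp)]
  exact InnerProductGeometry.angle_cos_smul_add_sin_smul (norm_smul_inv_norm hsp) hv huv h0 hπ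

end EuclideanGeometry

theorem angle_copying_general {p s q a b c : EuclideanSpace ℝ (Fin 2)}
    (hps : p ≠ s) (hq : q ∉ affineSpan ℝ ({p, s} : Set (EuclideanSpace ℝ (Fin 2)))) :
    ∃ a' c' x : EuclideanSpace ℝ (Fin 2),
      ∠ a' p c' = ∠ a b c ∧
      c' ∈ affineSpan ℝ ({p, s} : Set (EuclideanSpace ℝ (Fin 2))) ∧ c' ≠ p ∧
      x ∈ affineSpan ℝ ({p, s} : Set (EuclideanSpace ℝ (Fin 2))) ∧
      Wbtw ℝ q x a' := by
  obtain ⟨a', hangle, hopp⟩ :=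
    exists_angle_eq_wOppSide_line hps hq (angle_nonneg a b c) (angle_le_pi a b c)
  obtain ⟨x, hx, hwbtw⟩ := AffineSubspace.wOppSide_iff_exists_wbtw.1 hopp
  exact ⟨a', s, x, hangle, right_mem_affineSpan_pair ℝ p s, hps.symm, hx, hwbtw⟩

/-- Angle copying: any angle can be copied to a given vertex `p` on the line through
`p` and `s`, with the copy lying on the opposite side of that line from `q` (or on it). -/
theorem angle_copying {p s q a b c : EuclideanSpace ℝ (Fin 2)}
    (hps : p ≠ s) (hq : q ∉ affineSpan ℝ ({p, s} : Set (EuclideanSpace ℝ (Fin 2))))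
    (hab : a ≠ b) (hcb : c ≠ b) :
    ∃ a' c' x : EuclideanSpace ℝ (Fin 2),
      ∠ a' p c' = ∠ a b c ∧
      c' ∈ affineSpan ℝ ({p, s} : Set (EuclideanSpace ℝ (Fin 2))) ∧ c' ≠ p ∧
      x ∈ affineSpan ℝ ({p, s} : Set (EuclideanSpace ℝ (Fin 2))) ∧
      Wbtw ℝ q x a' :=
  angle_copying_general hps hq
end

section
/- Gupta's midpoint configuration: in a real inner product space, let a, b, c be non-collinear with dist a c = dist b c (isosceles triangle with apex c). Let d satisfy Sbtw ℝ c b d and e satisfy Sbtw ℝ c a e with dist b d = dist a e (both legs extended by congruent segments). Then the segments a d and e b intersect: there exists f with Sbtw ℝ a f d and Sbtw ℝ e f b, and moreover dist a f = dist b f (f lies on the perpendicular bisector of ab). -/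
/-!
Write `u = a - c` and `v = b - c`. Since `cb = ca` and `bd = ae`, both legs are stretched by the
same factor `t = cd / cb`, so `d = c + t • v` and `e = c + t • u`. The point
`f = c + (t / (t + 1)) • (u + v)` cuts both `ad` and `eb` in the ratio `1 : t`, and strictness
comes from the independence of `u` and `v`. As `‖u‖ = ‖v‖`, the reflection in `(u - v)ᗮ` swaps
`u` and `v` and fixes the axis `ℝ • (u + v)` through `f`, whence `af = bf`.
-/

theorem linearIndependent_vsub_of_not_collinear {k V P : Type*} [Field k] [AddCommGroup V]
    [Module k V] [AddTorsor V P] {a b c : P} (h : ¬ Collinear k ({a, b, c} : Set P)) :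
    LinearIndependent k ![a -ᵥ c, b -ᵥ c] := by
  rw [← affineIndependent_iff_not_collinear_set,
    affineIndependent_iff_linearIndependent_vsub k _ (2 : Fin 3),
    ← linearIndependent_equiv (finSuccAboveEquiv (2 : Fin 3))] at h
  convert! h
  ext i
  fin_cases i <;> rfl

theorem Wbtw.eq_div_dist_smul_vsub_vadd {V P : Type*} [NormedAddCommGroup V] [NormedSpace ℝ V]
    [MetricSpace P] [NormedAddTorsor V P] {c b d : P} (h : Wbtw ℝ c b d) (hbc : b ≠ c) :
    d = (dist c d / dist c b) • (b -ᵥ c) +ᵥ c := by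
  obtain ⟨s, ⟨hs, -⟩, rfl⟩ := h
  have hs₀ : s ≠ 0 := by rintro rfl; simp at hbc
  have hcd : dist c d ≠ 0 := dist_ne_zero.mpr (by rintro rfl; simp at hbc)
  have hscale : dist c d / (s * dist c d) * s = 1 := by field_simp
  rw [dist_left_lineMap, AffineMap.lineMap_apply, vadd_vsub, smul_smul, Real.norm_of_nonneg hs,
    hscale, one_smul, vsub_vadd]

theorem sbtw_vadd_div_smul_add_vadd {k V P : Type*} [Field k] [LinearOrder k]
    [IsStrictOrderedRing k] [AddCommGroup V] [Module k V] [AddTorsor V P] {u v : V}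
    (hind : LinearIndependent k ![u, v]) (c : P) {t : k} (ht : 0 < t) :
    Sbtw k (u +ᵥ c) ((t / (t + 1)) • (u + v) +ᵥ c) (t • v +ᵥ c) := by
  rw [sbtw_iff_mem_image_Ioo_and_ne]
  refine ⟨⟨1 / (t + 1), ⟨by positivity, ?_⟩, ?_⟩, ?_⟩
  · rw [div_lt_one (by positivity)]; linarith
  · rw [AffineMap.lineMap_apply, vadd_vsub_vadd_cancel_right, vadd_vadd]
    congr 1
    match_scalars <;> field_simp; ring
  · rw [Ne, vadd_right_cancel_iff]
    intro h
    have hrel : (1 : k) • u + (-t) • v = 0 := by rw [h]; module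
    exact one_ne_zero (LinearIndependent.pair_iff.mp hind 1 (-t) hrel).1

theorem dist_smul_add_eq_of_norm_eq {F : Type*} [NormedAddCommGroup F] [InnerProductSpace ℝ F]
    {u v : F} (h : ‖u‖ = ‖v‖) (s : ℝ) : dist u (s • (u + v)) = dist v (s • (u + v)) := by
  set R := (ℝ ∙ (u - v))ᗮ.reflection
  have hu : R u = v := Submodule.reflection_sub h
  have hv : R v = u := by rw [← hu, Submodule.reflection_reflection]
  rw [← R.dist_map, map_smul, map_add, hu, hv, add_comm]

/-- Gupta's midpoint configuration: extending both legs of an isosceles triangle by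
congruent segments, the cross segments meet in a point equidistant from the base
endpoints. -/
theorem gupta_configuration {V : Type*} [NormedAddCommGroup V] [InnerProductSpace ℝ V]
    {a b c d e : V} (hnc : ¬ Collinear ℝ ({a, b, c} : Set V))
    (hiso : dist a c = dist b c)
    (hd : Sbtw ℝ c b d) (he : Sbtw ℝ c a e) (hext : dist b d = dist a e) :
    ∃ f : V, Sbtw ℝ a f d ∧ Sbtw ℝ e f b ∧ dist a f = dist b f := by
  have hca : dist c a = dist c b := by rw [dist_comm, hiso, dist_comm]
  have hce : dist c e = dist c d := by
    rw [← he.wbtw.dist_add_dist, ← hd.wbtw.dist_add_dist, hca, hext]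
  set t := dist c d / dist c b
  have hd_eq : d = t • (b -ᵥ c) +ᵥ c := hd.wbtw.eq_div_dist_smul_vsub_vadd hd.ne_left
  have he_eq : e = t • (a -ᵥ c) +ᵥ c := by
    simpa only [hce, hca] using he.wbtw.eq_div_dist_smul_vsub_vadd he.ne_left
  have ht : 0 < t := div_pos (dist_pos.mpr hd.left_ne_right) (dist_pos.mpr hd.ne_left.symm)
  have hind := linearIndependent_vsub_of_not_collinear hnc
  refine ⟨(t / (t + 1)) • ((a -ᵥ c) + (b -ᵥ c)) +ᵥ c, ?_, ?_, ?_⟩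
  · simpa only [vsub_vadd, ← hd_eq] using sbtw_vadd_div_smul_add_vadd hind c ht
  · have hsbtw := sbtw_vadd_div_smul_add_vadd (LinearIndependent.pair_symm_iff.mp hind) c ht
    rw [vsub_vadd, ← he_eq, add_comm (b -ᵥ c)] at hsbtw
    exact hsbtw.symm
  · have hnorm : ‖a -ᵥ c‖ = ‖b -ᵥ c‖ := by rw [← dist_eq_norm_vsub, ← dist_eq_norm_vsub, hiso]
    have hdist := dist_smul_add_eq_of_norm_eq hnorm (t / (t + 1))
    rwa [← dist_vadd_cancel_right (a -ᵥ c) _ c, ← dist_vadd_cancel_right (b -ᵥ c) _ c, vsub_vadd,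
      vsub_vadd] at hdist
end

section
/- Inner Pasch holds in planes over ordered fields: let K be a linearly ordered field and V a K-vector space. If Sbtw K a p c, Sbtw K b q c, and a, b, c are not collinear over K, then there exists x with Sbtw K p x b and Sbtw K a x q. -/
/-!
Write `p = a + s (c - a)` and `q = b + t (c - b)` with `s, t ∈ (0, 1)`. Solving for the
intersection of the cevians `p b` and `a q` gives the parameters `s (1 - t) / D` on `p b` and
`s / D` on `a q`, where `D = s + t - s t = t + s (1 - t) = s + t (1 - s)`; both lie in `(0, 1)`.
-/

open AffineMap Set

section Cevians

variable {K : Type*} [Field K] {V : Type*} [AddCommGroup V] [Module K V]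

theorem lineMap_lineMap_eq_lineMap_lineMap (a b c : V) {s t : K} (hD : s + t - s * t ≠ 0) :
    lineMap (lineMap a c s) b (s * (1 - t) / (s + t - s * t)) =
      lineMap a (lineMap b c t) (s / (s + t - s * t)) := by
  simp only [lineMap_apply_module]
  match_scalars <;> field_simp <;> ring

end Cevians

section Parameters

variable {K : Type*} [Field K] [LinearOrder K] [IsStrictOrderedRing K] {s t : K}

theorem cevian_denom_pos (hs : s ∈ Ioo (0 : K) 1) (ht : t ∈ Ioo (0 : K) 1) :
    0 < s + t - s * t := by
  nlinarith [hs.1, hs.2, ht.1, ht.2]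

theorem div_cevian_denom_mem_Ioo (hs : s ∈ Ioo (0 : K) 1) (ht : t ∈ Ioo (0 : K) 1) :
    s / (s + t - s * t) ∈ Ioo (0 : K) 1 := by
  have hD := cevian_denom_pos hs ht
  refine ⟨div_pos hs.1 hD, (div_lt_one hD).2 ?_⟩
  nlinarith [hs.2, ht.1]

theorem mul_one_sub_div_cevian_denom_mem_Ioo (hs : s ∈ Ioo (0 : K) 1) (ht : t ∈ Ioo (0 : K) 1) :
    s * (1 - t) / (s + t - s * t) ∈ Ioo (0 : K) 1 := by
  have hD := cevian_denom_pos hs ht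
  refine ⟨div_pos (mul_pos hs.1 (sub_pos.2 ht.2)) hD, (div_lt_one hD).2 ?_⟩
  nlinarith [ht.1]

end Parameters

theorem Wbtw.ne_of_not_collinear {K : Type*} [Field K] [LinearOrder K] [IsStrictOrderedRing K]
    {V P : Type*} [AddCommGroup V] [Module K V] [AddTorsor V P] {a b c p : P}
    (h : Wbtw K a p c) (hnc : ¬ Collinear K ({a, b, c} : Set P)) : p ≠ b := by
  rintro rfl
  exact hnc h.collinear

/-- Inner Pasch holds in planes over ordered fields. -/
theorem inner_pasch {K : Type*} [Field K] [LinearOrder K] [IsStrictOrderedRing K] {V : Type*} [AddCommGroup V]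
    [Module K V] {a b c p q : V}
    (hp : Sbtw K a p c) (hq : Sbtw K b q c)
    (hnc : ¬ Collinear K ({a, b, c} : Set V)) :
    ∃ x : V, Sbtw K p x b ∧ Sbtw K a x q := by
  obtain ⟨s, hs, rfl⟩ := hp.mem_image_Ioo
  obtain ⟨t, ht, rfl⟩ := hq.mem_image_Ioo
  have hpb := hp.wbtw.ne_of_not_collinear hnc
  have hqa := hq.wbtw.ne_of_not_collinear (b := a) (by rwa [insert_comm])
  refine ⟨lineMap (lineMap a c s) b (s * (1 - t) / (s + t - s * t)),
    sbtw_lineMap_iff.2 ⟨hpb, mul_one_sub_div_cevian_denom_mem_Ioo hs ht⟩, ?_⟩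
  rw [lineMap_lineMap_eq_lineMap_lineMap a b c (cevian_denom_pos hs ht).ne']
  exact sbtw_lineMap_iff.2 ⟨hqa.symm, div_cevian_denom_mem_Ioo hs ht⟩
end

section
/- Euclid's fifth postulate (the paper's points-only formulation) holds in planes over ordered fields: let K be a linearly ordered field and V a K-vector space. Suppose t = midpoint K p q = midpoint K s r, the points p, q, s are not collinear over K, and Sbtw K q a r. Then there exists a point e with Sbtw K p a e and Sbtw K s q e. -/
/-!
Since `t` is the common midpoint, `pqrs` is a parallelogram: `r - q = p - s`. Writing
`a = q + u • (r - q)` with `0 < u < 1`, the segment `qa` is the segment `sp` scaled by `u`, so a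
homothety of ratio `u` maps `s ↦ q` and `p ↦ a`. Its centre `e` lies beyond `a` on the ray from `p`
and beyond `q` on the ray from `s`; non-collinearity of `p, q, s` makes both betweennesses strict.
-/

open AffineMap Set

section Homothety

variable {K V P : Type*} [Field K] [AddCommGroup V] [Module K V] [AddTorsor V P]

theorem homothety_vsub_homothety (e : P) (u : K) (x y : P) :
    homothety e u x -ᵥ homothety e u y = u • (x -ᵥ y) := by
  rw [← linearMap_vsub, homothety_linear]
  rfl

theorem exists_homothety_eq_of_vsub_eq_smul_vsub {x y x' y' : P} {u : K} (hu : u ≠ 1)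
    (h : x' -ᵥ y' = u • (x -ᵥ y)) : ∃ e, homothety e u x = x' ∧ homothety e u y = y' := by
  have hu' : 1 - u ≠ 0 := sub_ne_zero.2 hu.symm
  set e := lineMap x x' (1 - u)⁻¹
  have hx : homothety e u x = x' := by
    rw [homothety_apply, eq_comm, eq_vadd_iff_vsub_eq, ← neg_vsub_eq_vsub_rev e x,
      lineMap_vsub_left, ← vsub_sub_vsub_cancel_right x' e x, lineMap_vsub_left]
    have hcoeff : u * (1 - u)⁻¹ = (1 - u)⁻¹ - 1 := by field_simp; ring
    rw [smul_neg, smul_smul, hcoeff]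
    module
  refine ⟨e, hx, ?_⟩
  rw [← vsub_left_cancel_iff (p := x'), ← hx, homothety_vsub_homothety, hx,
    ← neg_vsub_eq_vsub_rev x y, ← neg_vsub_eq_vsub_rev x' y', h, smul_neg]

variable [LinearOrder K] [IsStrictOrderedRing K]

theorem sbtw_homothety_left {x e : P} {u : K} (hu : u ∈ Ioo 0 1) (hx : x ≠ e) :
    Sbtw K x (homothety e u x) e := by
  rw [homothety_eq_lineMap, sbtw_comm]
  exact sbtw_lineMap_iff.2 ⟨hx.symm, hu⟩

theorem exists_sbtw_sbtw_of_vsub_eq_smul_vsub {x y x' y' : P} {u : K} (hu : u ∈ Ioo 0 1)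
    (h : x' -ᵥ y' = u • (x -ᵥ y)) (hx : x' ≠ x) (hy : y' ≠ y) :
    ∃ e, Sbtw K x x' e ∧ Sbtw K y y' e := by
  obtain ⟨e, rfl, rfl⟩ := exists_homothety_eq_of_vsub_eq_smul_vsub hu.2.ne h
  refine ⟨e, sbtw_homothety_left hu ?_, sbtw_homothety_left hu ?_⟩
  · rintro rfl
    exact hx (homothety_apply_same _ _)
  · rintro rfl
    exact hy (homothety_apply_same _ _)

end Homothety

/-- Euclid's fifth postulate (points-only formulation) holds in planes over ordered
fields. -/
theorem euclid5 {K : Type*} [Field K] [LinearOrder K] [IsStrictOrderedRing K] {V : Type*} [AddCommGroup V]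
    [Module K V] {p q r s t a : V}
    (ht1 : t = midpoint K p q) (ht2 : t = midpoint K s r)
    (hnc : ¬ Collinear K ({p, q, s} : Set V))
    (ha : Sbtw K q a r) :
    ∃ e : V, Sbtw K p a e ∧ Sbtw K s q e := by
  obtain ⟨u, hu, rfl⟩ := ha.mem_image_Ioo
  have hrq : r -ᵥ q = p -ᵥ s :=
    ((midpoint_eq_midpoint_iff_vsub_eq_vsub K).1 (ht1 ▸ ht2 : midpoint K p q = midpoint K s r)).symm
  have hparallel : lineMap q r u -ᵥ q = u • (p -ᵥ s) := by rw [lineMap_vsub_left, hrq]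
  have hqs : q ≠ s := by
    rintro rfl
    exact hnc (by simpa using collinear_pair K p q)
  have hap : lineMap q r u ≠ p := by
    intro hp
    rw [hp, vsub_eq_sub, vsub_eq_sub] at hparallel
    refine hnc (Wbtw.collinear ⟨u, ⟨hu.1.le, hu.2.le⟩, ?_⟩)
    rw [lineMap_apply_module']
    linear_combination (norm := module) hparallel
  exact exists_sbtw_sbtw_of_vsub_eq_smul_vsub hu hparallel hap hqs
end

section
/- Line-circle continuity: in a real inner product space, if dist c p < r (p is strictly inside the circle with center c and radius r) and b ≠ p, then there exist points x and y with dist c x = r, dist c y = r, Sbtw ℝ x p y, and both x and y collinear with p and b (Collinear ℝ {p, b, x} and Collinear ℝ {p, b, y}): the line through p and b meets the circle in two points with p strictly between them. -/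
/-!
The distance from `c` along the line `t ↦ lineMap p b t` is continuous, is `< r` at `t = 0` and
grows without bound in both directions, so by the intermediate value theorem it equals `r` at
some `s < 0` and some `t > 0`; `p = lineMap p b 0` lies strictly between these two points.
-/

open AffineMap

section

variable {V P : Type*} [NormedAddCommGroup V] [NormedSpace ℝ V] [MetricSpace P]
  [NormedAddTorsor V P]

theorem exists_pos_dist_lineMap_eq {c p b : P} {r : ℝ} (hp : dist c p < r) (hpb : p ≠ b) :
    ∃ t : ℝ, 0 < t ∧ dist c (lineMap p b t) = r := by
  have hdist : 0 < dist p b := dist_pos.2 hpb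
  set T := (r + dist c p) / dist p b
  have hT : 0 ≤ T := div_nonneg (by linarith [dist_nonneg (x := c) (y := p)]) hdist.le
  -- `lineMap p b T` is at distance `r + dist c p` from `p`
  have hfar : r ≤ dist c (lineMap p b T) := by
    have : T * dist p b = r + dist c p := div_mul_cancel₀ _ hdist.ne'
    have := dist_triangle p c (lineMap p b T)
    rw [dist_left_lineMap, Real.norm_of_nonneg hT, dist_comm p c] at this
    linarith
  have hcont : Continuous fun t : ℝ ↦ dist c (lineMap p b t) := by fun_prop
  obtain ⟨t, ⟨ht0, -⟩, ht⟩ := intermediate_value_Ioc hT hcont.continuousOn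
    ⟨by simpa using hp, hfar⟩
  exact ⟨t, ht0, ht⟩

theorem exists_neg_dist_lineMap_eq {c p b : P} {r : ℝ} (hp : dist c p < r) (hpb : p ≠ b) :
    ∃ t : ℝ, t < 0 ∧ dist c (lineMap p b t) = r := by
  have hpb' : p ≠ lineMap p b (-1 : ℝ) := by simpa [eq_comm (a := p)] using hpb
  obtain ⟨t, ht0, ht⟩ := exists_pos_dist_lineMap_eq hp hpb'
  refine ⟨t * -1, by linarith, ?_⟩
  rwa [lineMap_lineMap_right] at ht

theorem collinear_lineMap (p b : P) (t : ℝ) : Collinear ℝ {p, b, lineMap p b t} :=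
  collinear_triple_of_mem_affineSpan_pair (left_mem_affineSpan_pair ℝ p b)
    (right_mem_affineSpan_pair ℝ p b) (lineMap_mem_affineSpan_pair t p b)

theorem sbtw_lineMap_of_neg_of_pos {p b : P} (hpb : p ≠ b) {s t : ℝ} (hs : s < 0) (ht : 0 < t) :
    Sbtw ℝ (lineMap p b s) p (lineMap p b t) := by
  simpa using (lineMap_injective ℝ hpb).sbtw_map_iff.2 (Sbtw.of_lt_of_lt hs ht)

end

/-- Line-circle continuity: a line through a point strictly inside a circle meets the
circle in two points, with the given point strictly between them. -/
theorem line_circle_continuity {V : Type*} [NormedAddCommGroup V] [InnerProductSpace ℝ V]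
    {c p b : V} {r : ℝ} (hin : dist c p < r) (hbp : b ≠ p) :
    ∃ x y : V, dist c x = r ∧ dist c y = r ∧ Sbtw ℝ x p y ∧
      Collinear ℝ ({p, b, x} : Set V) ∧ Collinear ℝ ({p, b, y} : Set V) := by
  obtain ⟨s, hs, hx⟩ := exists_neg_dist_lineMap_eq hin hbp.symm
  obtain ⟨t, ht, hy⟩ := exists_pos_dist_lineMap_eq hin hbp.symm
  exact ⟨_, _, hx, hy, sbtw_lineMap_of_neg_of_pos hbp.symm hs ht,
    collinear_lineMap p b s, collinear_lineMap p b t⟩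
end

section
/- Circle-circle continuity: in the Euclidean plane EuclideanSpace ℝ (Fin 2), suppose dist c a = r and dist c b = r (a and b lie on the circle with center c and radius r), dist C a ≤ R (a is non-strictly inside the circle with center C and radius R), and R ≤ dist C b (b is non-strictly outside it). Then there exists a point e with dist c e = r and dist C e = R (the two circles meet). -/
/-- Circle-circle continuity in the Euclidean plane. -/
theorem circle_circle_continuity {c C a b : EuclideanSpace ℝ (Fin 2)} {r R : ℝ}
    (ha : dist c a = r) (hb : dist c b = r)
    (hin : dist C a ≤ R) (hout : R ≤ dist C b) :
    ∃ e : EuclideanSpace ℝ (Fin 2), dist c e = r ∧ dist C e = R := by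
  have hr : 0 ≤ r := ha ▸ dist_nonneg
  have hconn : IsConnected (Metric.sphere c r) := by
    apply isConnected_sphere ?_ c hr
    rw [← Module.finrank_eq_rank, finrank_euclideanSpace_fin]
    norm_num
  have haS : a ∈ Metric.sphere c r := by rw [Metric.mem_sphere, dist_comm]; exact ha
  have hbS : b ∈ Metric.sphere c r := by rw [Metric.mem_sphere, dist_comm]; exact hb
  have hcont : ContinuousOn (fun x : EuclideanSpace ℝ (Fin 2) => dist C x)
      (Metric.sphere c r) := (Continuous.dist continuous_const continuous_id).continuousOn
  obtain ⟨e, heS, he⟩ := hconn.isPreconnected.intermediate_value haS hbS hcont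
    (Set.mem_Icc.mpr ⟨hin, hout⟩)
  exact ⟨e, by rw [dist_comm]; exact heS, he⟩
end

section
/- The five-segment axiom holds in real inner product spaces: if Wbtw ℝ a b c and Wbtw ℝ A B C, a ≠ b, dist a b = dist A B, dist b c = dist B C, dist a d = dist A D, and dist b d = dist B D, then dist c d = dist C D. -/
/-!
By Stewart's theorem, for `b` on the segment `[a, c]` the quantity `dist d c ^ 2 * dist a b` is
determined by `dist a b`, `dist b c`, `dist a d` and `dist b d`, since `dist a c = dist a b + dist b c`.
As `dist a b ≠ 0`, this determines `dist c d`.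
-/

open EuclideanGeometry

theorem Wbtw.dist_sq_mul_dist_add_dist_sq_mul_dist {V P : Type*} [NormedAddCommGroup V]
    [InnerProductSpace ℝ V] [MetricSpace P] [NormedAddTorsor V P] {a b c : P}
    (h : Wbtw ℝ a b c) (p : P) :
    dist p a ^ 2 * dist b c + dist p c ^ 2 * dist a b =
      dist a c * (dist p b ^ 2 + dist a b * dist b c) := by
  rcases eq_or_ne b a with rfl | hba
  · simp only [dist_self]; ring
  rcases eq_or_ne b c with rfl | hbc
  · simp only [dist_self]; ring
  simpa only [dist_comm c b] using
    EuclideanGeometry.dist_sq_mul_dist_add_dist_sq_mul_dist p a c b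
      (Sbtw.angle₁₂₃_eq_pi ⟨h, hba, hbc⟩)

/-- The five-segment axiom holds in real inner product spaces. -/
theorem five_segment {V : Type*} [NormedAddCommGroup V] [InnerProductSpace ℝ V]
    {a b c d A B C D : V}
    (hw : Wbtw ℝ a b c) (hW : Wbtw ℝ A B C) (hab : a ≠ b)
    (h1 : dist a b = dist A B) (h2 : dist b c = dist B C)
    (h3 : dist a d = dist A D) (h4 : dist b d = dist B D) :
    dist c d = dist C D := by
  have hstew := hw.dist_sq_mul_dist_add_dist_sq_mul_dist d
  have hStew := hW.dist_sq_mul_dist_add_dist_sq_mul_dist D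
  rw [← hw.dist_add_dist] at hstew
  rw [← hW.dist_add_dist, ← h1, ← h2] at hStew
  simp only [dist_comm d, dist_comm D, h3, h4] at hstew hStew
  have hsq : dist c d ^ 2 = dist C D ^ 2 :=
    mul_right_cancel₀ (dist_ne_zero.mpr hab) (by linarith)
  exact (pow_left_inj₀ dist_nonneg dist_nonneg two_ne_zero).mp hsq
end
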